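/- arXiv:1909.11183 — 8 statements merged into one kernel-verified Lean document; each statement's English description precedes it below -/
import Mathlib

section
/- Let X be a topological space and let Y ⊆ X be a closed subset carrying the subspace topology. Under the inclusion of the power set of Y into the power set of X, the subspace topology that the set of subsets of Y inherits from the upper co-compact topology on the power set of X equals the upper co-compact topology of the space Y; likewise, the subspace topology inherited from the lower co-compact topology on the power set of X equals the lower co-compact topology of the space Y. -/
open Filter Set Topology TopologicalSpace

/-- The upper co-compact topology on the power set of `X`, generated by the sets
`{A | A ∩ K = ∅}` for `K` compact. -/
def upperCocompact (X : Type*) [TopologicalSpace X] : TopologicalSpace (Set X) :=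
  generateFrom {S | ∃ K : Set X, IsCompact K ∧ S = {A : Set X | A ∩ K = ∅}}

/-- The lower co-compact topology on the power set of `X`, generated by the sets
`{A | A ∩ Kᶜ ≠ ∅}` for `K` compact. -/
def lowerCocompact (X : Type*) [TopologicalSpace X] : TopologicalSpace (Set X) :=
  generateFrom {S | ∃ K : Set X, IsCompact K ∧ S = {A : Set X | (A ∩ Kᶜ).Nonempty}}

/-- Naturality of the co-compact topologies with respect to closed subspaces: if `Y ⊆ X`
is closed, then under the inclusion `Set Y → Set X` the subspace topology induced by the
upper [lower] co-compact topology on `Set X` is the upper [lower] co-compact topology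
of the subspace `Y`. -/
theorem stmt_5 {X : Type*} [TopologicalSpace X] (Y : Set X) (hY : IsClosed Y) :
    TopologicalSpace.induced (fun A : Set Y => (Subtype.val '' A : Set X))
        (upperCocompact X) = upperCocompact Y ∧
      TopologicalSpace.induced (fun A : Set Y => (Subtype.val '' A : Set X))
        (lowerCocompact X) = lowerCocompact Y := by
  have hce : Topology.IsClosedEmbedding (Subtype.val : Y → X) :=
    hY.isClosedEmbedding_subtypeVal
  have key1 : ∀ K : Set X,
      (fun A : Set Y => (Subtype.val '' A : Set X)) ⁻¹' {B : Set X | B ∩ K = ∅}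
        = {A : Set Y | A ∩ (Subtype.val ⁻¹' K) = ∅} := by
    intro K; ext A
    simp [Set.eq_empty_iff_forall_notMem]
  have key2 : ∀ K : Set X,
      (fun A : Set Y => (Subtype.val '' A : Set X)) ⁻¹' {B : Set X | (B ∩ Kᶜ).Nonempty}
        = {A : Set Y | (A ∩ (Subtype.val ⁻¹' K)ᶜ).Nonempty} := by
    intro K; ext A
    simp only [Set.mem_preimage, Set.mem_setOf_eq, Set.Nonempty]
    constructor
    · rintro ⟨x, ⟨y, hyA, rfl⟩, hx⟩; exact ⟨y, hyA, hx⟩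
    · rintro ⟨y, hyA, hy⟩; exact ⟨y, ⟨y, hyA, rfl⟩, hy⟩
  constructor
  · rw [upperCocompact, upperCocompact, induced_generateFrom_eq]
    congr 1
    ext S
    constructor
    · rintro ⟨_, ⟨K, hK, rfl⟩, rfl⟩
      exact ⟨Subtype.val ⁻¹' K, hce.isCompact_preimage hK, key1 K⟩
    · rintro ⟨K, hK, rfl⟩
      refine ⟨{B : Set X | B ∩ (Subtype.val '' K) = ∅},
        ⟨Subtype.val '' K, hK.image continuous_subtype_val, rfl⟩, ?_⟩
      rw [key1, Set.preimage_image_eq K Subtype.val_injective]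
  · rw [lowerCocompact, lowerCocompact, induced_generateFrom_eq]
    congr 1
    ext S
    constructor
    · rintro ⟨_, ⟨K, hK, rfl⟩, rfl⟩
      exact ⟨Subtype.val ⁻¹' K, hce.isCompact_preimage hK, key2 K⟩
    · rintro ⟨K, hK, rfl⟩
      refine ⟨{B : Set X | (B ∩ (Subtype.val '' K)ᶜ).Nonempty},
        ⟨Subtype.val '' K, hK.image continuous_subtype_val, rfl⟩, ?_⟩
      rw [key2, Set.preimage_image_eq K Subtype.val_injective]
end

section
/- If X is a second countable topological space, then the power set of X equipped with the lower Vietoris topology is second countable. -/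
open Filter Set Topology TopologicalSpace

/-- The lower Vietoris topology on the power set of `X`, generated by the sets
`{A | A ∩ U ≠ ∅}` for `U` open. -/
def lowerVietoris (X : Type*) [TopologicalSpace X] : TopologicalSpace (Set X) :=
  generateFrom {S | ∃ U : Set X, IsOpen U ∧ S = {A : Set X | (A ∩ U).Nonempty}}

/-- If `X` is second countable, then the power set of `X` with the lower Vietoris
topology is second countable. -/
theorem stmt_6 (X : Type*) [TopologicalSpace X] [SecondCountableTopology X] :
    @SecondCountableTopology (Set X) (lowerVietoris X) := by
  letI := lowerVietoris X
  set B := countableBasis X with hB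
  refine ⟨⟨(fun b => {A : Set X | (A ∩ b).Nonempty}) '' B,
    (countable_countableBasis X).image _, ?_⟩⟩
  apply le_antisymm
  · apply generateFrom_anti
    rintro _ ⟨b, hb, rfl⟩
    exact ⟨b, (isBasis_countableBasis X).isOpen hb, rfl⟩
  · apply le_generateFrom
    rintro _ ⟨U, hU, rfl⟩
    have : {A : Set X | (A ∩ U).Nonempty} =
        ⋃ b ∈ {b ∈ B | b ⊆ U}, {A : Set X | (A ∩ b).Nonempty} := by
      ext A
      simp only [mem_setOf_eq, mem_iUnion, exists_prop, mem_sep_iff]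
      constructor
      · rintro ⟨x, hxA, hxU⟩
        obtain ⟨b, hbB, hxb, hbU⟩ := (isBasis_countableBasis X).exists_subset_of_mem_open hxU hU
        exact ⟨b, ⟨hbB, hbU⟩, x, hxA, hxb⟩
      · rintro ⟨b, ⟨_, hbU⟩, x, hxA, hxb⟩
        exact ⟨x, hxA, hbU hxb⟩
    rw [this]
    refine @isOpen_biUnion _ _ (generateFrom _) _ _ fun b hb => ?_
    exact GenerateOpen.basic _ ⟨b, hb.1, rfl⟩
end

section
/- Let X be a regular topological space, let l be a filter on an index type ι, let A : ι → Set X be a family of subsets, and let A₀ ⊆ X. If A converges to A₀ along l in the upper Vietoris topology on the power set of X, then the closure of A₀ contains the upper closed limit Ls_l A. -/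
open Filter Set Topology TopologicalSpace

/-- The upper Vietoris topology on the power set of `X`, generated by the sets
`{A | A ⊆ U}` for `U` open. -/
def upperVietoris (X : Type*) [TopologicalSpace X] : TopologicalSpace (Set X) :=
  generateFrom {S | ∃ U : Set X, IsOpen U ∧ S = {A : Set X | A ⊆ U}}

/-- The Kuratowski limit superior (upper closed limit) of a family of sets along a filter. -/
def KuratowskiLs {X ι : Type*} [TopologicalSpace X] (l : Filter ι) (A : ι → Set X) : Set X :=
  {x | ∀ U : Set X, IsOpen U → x ∈ U → ∃ᶠ i in l, (A i ∩ U).Nonempty}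

/-- If `X` is regular and `A` converges to `A₀` along `l` in the upper Vietoris topology,
then the closure of `A₀` contains the upper closed limit of `A`. -/
theorem stmt_8 {X ι : Type*} [TopologicalSpace X] [RegularSpace X]
    (l : Filter ι) (A : ι → Set X) (A₀ : Set X)
    (h : Tendsto A l (@nhds (Set X) (upperVietoris X) A₀)) :
    KuratowskiLs l A ⊆ closure A₀ := by
  intro x hx
  by_contra hxc
  have hUx : (closure A₀)ᶜ ∈ 𝓝 x :=
    isClosed_closure.isOpen_compl.mem_nhds hxc
  obtain ⟨C, hC, hCcl, hCsub⟩ := exists_mem_nhds_isClosed_subset hUx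
  -- A₀ ⊆ Cᶜ, open
  have hA₀ : A₀ ⊆ Cᶜ := fun y hy hyC => hCsub hyC (subset_closure hy)
  have hWopen : IsOpen Cᶜ := hCcl.isOpen_compl
  -- {B | B ⊆ Cᶜ} is a nhd of A₀ in upperVietoris
  have hmem : {B : Set X | B ⊆ Cᶜ} ∈ @nhds (Set X) (upperVietoris X) A₀ := by
    letI : TopologicalSpace (Set X) := upperVietoris X
    have : IsOpen {B : Set X | B ⊆ Cᶜ} := isOpen_generateFrom_of_mem ⟨Cᶜ, hWopen, rfl⟩
    exact this.mem_nhds hA₀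
  have hev : ∀ᶠ i in l, A i ⊆ Cᶜ := h hmem
  have hfreq := hx (interior C) isOpen_interior (mem_interior_iff_mem_nhds.2 hC)
  obtain ⟨i, ⟨y, hyA, hyC⟩, hsub⟩ := (hfreq.and_eventually hev).exists
  exact hsub hyA (interior_subset hyC)
end

section
/- Let X be a locally compact topological space, let l be a filter on an index type ι, let A : ι → Set X be a family of subsets, and let A₀ ⊆ X. If A converges to A₀ along l in the upper co-compact topology on the power set of X, then the closure of A₀ contains the upper closed limit Ls_l A. -/
open Filter Set Topology TopologicalSpace

/-- If `X` is locally compact and `A` converges to `A₀` along `l` in the upper co-compact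
topology, then the closure of `A₀` contains the upper closed limit of `A`. -/
theorem stmt_9 {X ι : Type*} [TopologicalSpace X] [LocallyCompactSpace X]
    (l : Filter ι) (A : ι → Set X) (A₀ : Set X)
    (h : Tendsto A l (@nhds (Set X) (upperCocompact X) A₀)) :
    KuratowskiLs l A ⊆ closure A₀ := by
  intro x hx
  by_contra hxc
  obtain ⟨U, hUopen, hxU, hU⟩ : ∃ U, IsOpen U ∧ x ∈ U ∧ U ∩ A₀ = ∅ := by
    rw [mem_closure_iff] at hxc
    push_neg at hxc
    obtain ⟨U, hUo, hxU, hne⟩ := hxc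
    exact ⟨U, hUo, hxU, hne⟩
  obtain ⟨K, hKn, hKU, hKc⟩ := local_compact_nhds (IsOpen.mem_nhds hUopen hxU)
  have hopen : (upperCocompact X).IsOpen {A : Set X | A ∩ K = ∅} :=
    TopologicalSpace.GenerateOpen.basic _ ⟨K, hKc, rfl⟩
  have hA₀ : A₀ ∩ K = ∅ := by
    apply eq_empty_of_subset_empty
    rw [← hU]
    exact fun y ⟨hy1, hy2⟩ => ⟨hKU hy2, hy1⟩
  letI : TopologicalSpace (Set X) := upperCocompact X
  have hev : ∀ᶠ i in l, A i ∩ K = ∅ :=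
    h (IsOpen.mem_nhds hopen hA₀)
  have hfreq := hx (interior K) isOpen_interior (mem_interior_iff_mem_nhds.mpr hKn)
  obtain ⟨i, ⟨y, hy1, hy2⟩, hie⟩ := (hfreq.and_eventually hev).exists
  exact absurd hie (by
    rw [eq_empty_iff_forall_notMem]
    push_neg
    exact ⟨y, hy1, interior_subset hy2⟩)
end

section
/- Let X be a compact topological space, let l be a nontrivial filter on an index type ι, let A : ι → Set X be a family of subsets, and let A₀ ⊆ X. If A₀ contains the upper closed limit Ls_l A, then A converges to A₀ along l in the upper Vietoris topology on the power set of X. -/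
open Filter Set Topology TopologicalSpace

/-- If `X` is compact and `A₀` contains the upper closed limit of `A` along a nontrivial
filter `l`, then `A` converges to `A₀` along `l` in the upper Vietoris topology. -/
theorem stmt_10 {X ι : Type*} [TopologicalSpace X] [CompactSpace X]
    (l : Filter ι) [l.NeBot] (A : ι → Set X) (A₀ : Set X)
    (h : KuratowskiLs l A ⊆ A₀) :
    Tendsto A l (@nhds (Set X) (upperVietoris X) A₀) := by
  rw [upperVietoris]
  rw [tendsto_nhds_generateFrom_iff]
  rintro S ⟨U, hU, rfl⟩ hmem
  have hmem' : A₀ ⊆ U := hmem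
  simp only [mem_setOf_eq] at hmem
  show ∀ᶠ i in l, A i ⊆ U
  -- every x ∈ Uᶜ is not in the Kuratowski Ls
  have hx : ∀ x ∈ Uᶜ, ∃ V : Set X, IsOpen V ∧ x ∈ V ∧ ∀ᶠ i in l, A i ∩ V = ∅ := by
    intro x hxU
    have : x ∉ KuratowskiLs l A := fun hx => hxU (hmem' (h hx))
    simp only [KuratowskiLs, mem_setOf_eq, not_forall] at this
    obtain ⟨V, hVopen, hxV, hfreq⟩ := this
    exact ⟨V, hVopen, hxV, by
      simpa [Filter.not_frequently, Set.not_nonempty_iff_eq_empty] using hfreq⟩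
  choose V hVopen hxV hVev using hx
  have hcompact : IsCompact Uᶜ := (hU.isClosed_compl).isCompact
  have hcover : Uᶜ ⊆ ⋃ x : ↥(Uᶜ), V x.1 x.2 := fun x hxU =>
    mem_iUnion.2 ⟨⟨x, hxU⟩, hxV x hxU⟩
  obtain ⟨t, ht⟩ := hcompact.elim_finite_subcover (fun x : ↥(Uᶜ) => V x.1 x.2)
    (fun x => hVopen x.1 x.2) hcover
  have hev : ∀ᶠ i in l, ∀ x ∈ t, A i ∩ V x.1 x.2 = ∅ :=
    (Filter.eventually_all_finite t.finite_toSet).2 fun x _ => hVev x.1 x.2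
  filter_upwards [hev] with i hi x hxA
  by_contra hxU
  obtain ⟨y, hyt, hyV⟩ := mem_iUnion₂.1 (ht hxU)
  have : x ∈ A i ∩ V y.1 y.2 := ⟨hxA, hyV⟩
  rw [hi y hyt] at this
  exact this
end

section
/- Let X be a topological space, let l be a nontrivial filter on an index type ι, let A : ι → Set X be a family of subsets, and let A₀ ⊆ X. If A₀ contains the upper closed limit Ls_l A, then A converges to A₀ along l in the upper co-compact topology on the power set of X. -/
open Filter Set Topology TopologicalSpace

/-- If `A₀` contains the upper closed limit of `A` along a nontrivial filter `l`, then
`A` converges to `A₀` along `l` in the upper co-compact topology. -/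
theorem stmt_11 {X ι : Type*} [TopologicalSpace X]
    (l : Filter ι) [l.NeBot] (A : ι → Set X) (A₀ : Set X)
    (h : KuratowskiLs l A ⊆ A₀) :
    Tendsto A l (@nhds (Set X) (upperCocompact X) A₀) := by
  rw [upperCocompact]
  rw [tendsto_nhds_generateFrom_iff]
  rintro S ⟨K, hK, rfl⟩ hA₀
  simp only [mem_setOf_eq] at hA₀
  have key : ∀ x : K, ∃ U : Set X, IsOpen U ∧ (x : X) ∈ U ∧ ∀ᶠ i in l, A i ∩ U = ∅ := by
    rintro ⟨x, hx⟩
    have hxnot : x ∉ KuratowskiLs l A := fun hxl =>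
      (Set.eq_empty_iff_forall_notMem.mp hA₀ x) ⟨h hxl, hx⟩
    simp only [KuratowskiLs, mem_setOf_eq, not_forall] at hxnot
    obtain ⟨U, hU, hxU, hfreq⟩ := hxnot
    exact ⟨U, hU, hxU, by
      simpa [not_frequently, Set.not_nonempty_iff_eq_empty] using hfreq⟩
  choose U hUopen hxU hUev using key
  obtain ⟨t, hsub⟩ := hK.elim_finite_subcover U hUopen (fun x hx => mem_iUnion.mpr ⟨⟨x, hx⟩, hxU ⟨x, hx⟩⟩)
  have hev : ∀ᶠ i in l, ∀ x ∈ t, A i ∩ U x = ∅ :=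
    (Filter.eventually_all_finset t).2 fun x _ => hUev x
  filter_upwards [hev] with i hi
  show A i ∩ K = ∅
  apply eq_empty_iff_forall_notMem.mpr
  rintro y ⟨hyA, hyK⟩
  obtain ⟨x, hxt, hyU⟩ := mem_iUnion₂.mp (hsub hyK)
  exact (eq_empty_iff_forall_notMem.mp (hi x hxt)) y ⟨hyA, hyU⟩
end

section
/- Let X be a topological space, let l be a filter on an index type ι, let A : ι → Set X be a family of subsets, and let A₀ ⊆ X. Then A converges to A₀ along l in the lower Vietoris topology on the power set of X if and only if A₀ is contained in the lower closed limit Li_l A. -/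
open Filter Set Topology TopologicalSpace

/-- The Kuratowski limit inferior (lower closed limit) of a family of sets along a filter. -/
def KuratowskiLi {X ι : Type*} [TopologicalSpace X] (l : Filter ι) (A : ι → Set X) : Set X :=
  {x | ∀ U : Set X, IsOpen U → x ∈ U → ∀ᶠ i in l, (A i ∩ U).Nonempty}

/-- `A` converges to `A₀` along `l` in the lower Vietoris topology if and only if `A₀` is
contained in the lower closed limit of `A`. -/
theorem stmt_12 {X ι : Type*} [TopologicalSpace X]
    (l : Filter ι) (A : ι → Set X) (A₀ : Set X) :
    Tendsto A l (@nhds (Set X) (lowerVietoris X) A₀) ↔ A₀ ⊆ KuratowskiLi l A := by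
  rw [lowerVietoris, tendsto_nhds_generateFrom_iff]
  constructor
  · intro h x hx U hU hxU
    exact h {B | (B ∩ U).Nonempty} ⟨U, hU, rfl⟩ ⟨x, hx, hxU⟩
  · rintro h S ⟨U, hU, rfl⟩ ⟨x, hxA, hxU⟩
    exact h hxA U hU hxU
end

section
/- Let X be a topological space, let l be a filter on an index type ι, let A : ι → Set X be a family of subsets, and let A₀ ⊆ X. If X is Hausdorff and A₀ is contained in the lower closed limit Li_l A, then A converges to A₀ along l in the lower co-compact topology on the power set of X. Conversely, if X is compact and A converges to A₀ along l in the lower co-compact topology, then A₀ is contained in Li_l A. -/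
open Filter Set Topology TopologicalSpace

/-!
Convergence in the lower co-compact topology means: whenever `A₀` meets the complement of a
compact set `K`, eventually `A i` meets `Kᶜ`. In a Hausdorff space each such `Kᶜ` is open, so
`A₀ ⊆ Li_l A` gives this. In a compact space every open `U` is of this form, since `Uᶜ` is
compact, so convergence gives the defining property of `Li_l A` at every point of `A₀`.
-/

theorem tendsto_lowerCocompact_iff {X ι : Type*} [TopologicalSpace X] {l : Filter ι}
    {A : ι → Set X} {A₀ : Set X} :
    Tendsto A l (@nhds (Set X) (lowerCocompact X) A₀) ↔
      ∀ K : Set X, IsCompact K → (A₀ ∩ Kᶜ).Nonempty → ∀ᶠ i in l, (A i ∩ Kᶜ).Nonempty := by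
  rw [lowerCocompact, tendsto_nhds_generateFrom_iff]
  exact ⟨fun h K hK => h _ ⟨K, hK, rfl⟩, fun h _ ⟨K, hK, hS⟩ => hS ▸ h K hK⟩

theorem tendsto_lowerCocompact_of_subset_kuratowskiLi {X ι : Type*} [TopologicalSpace X]
    [T2Space X] {l : Filter ι} {A : ι → Set X} {A₀ : Set X} (h : A₀ ⊆ KuratowskiLi l A) :
    Tendsto A l (@nhds (Set X) (lowerCocompact X) A₀) :=
  tendsto_lowerCocompact_iff.2 fun K hK ⟨_, hxA₀, hxK⟩ =>
    h hxA₀ Kᶜ hK.isClosed.isOpen_compl hxK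

theorem subset_kuratowskiLi_of_tendsto_lowerCocompact {X ι : Type*} [TopologicalSpace X]
    [CompactSpace X] {l : Filter ι} {A : ι → Set X} {A₀ : Set X}
    (h : Tendsto A l (@nhds (Set X) (lowerCocompact X) A₀)) : A₀ ⊆ KuratowskiLi l A := by
  intro x hx U hU hxU
  have hUc : IsCompact Uᶜ := hU.isClosed_compl.isCompact
  simpa only [compl_compl] using
    tendsto_lowerCocompact_iff.1 h Uᶜ hUc ⟨x, hx, by rwa [compl_compl]⟩

/-- If `X` is Hausdorff and `A₀ ⊆ Li_l A`, then `A` converges to `A₀` along `l` in the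
lower co-compact topology; conversely, if `X` is compact and `A` converges to `A₀` along
`l` in the lower co-compact topology, then `A₀ ⊆ Li_l A`. -/
theorem stmt_13 {X ι : Type*} [TopologicalSpace X]
    (l : Filter ι) (A : ι → Set X) (A₀ : Set X) :
    (T2Space X → A₀ ⊆ KuratowskiLi l A →
        Tendsto A l (@nhds (Set X) (lowerCocompact X) A₀)) ∧
      (CompactSpace X → Tendsto A l (@nhds (Set X) (lowerCocompact X) A₀) →
        A₀ ⊆ KuratowskiLi l A) :=
  ⟨fun _ => tendsto_lowerCocompact_of_subset_kuratowskiLi,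
    fun _ => subset_kuratowskiLi_of_tendsto_lowerCocompact⟩
end
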